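/- arXiv:nlin/0605008 — 8 statements merged into one kernel-verified Lean document; each statement's English description precedes it below -/
import Mathlib

section
/- Let A, B be polynomials over ℂ. If the only common zeroes of A and B are simple zeroes of B (i.e. A and B are reduced), then the only common zeroes of A + B' and B are simple zeroes of B, and likewise for A - B'. Conversely, if A + B' and B are reduced then so are A and B. -/
open Polynomial

/-- Two polynomials `A, B` over `ℂ` are *reduced* if every common zero of `A` and `B`
is a simple zero of `B` (i.e. `B'` does not vanish there). -/
def Reduced (A B : Polynomial ℂ) : Prop :=
  ∀ c : ℂ, A.eval c = 0 → B.eval c = 0 → (derivative B).eval c ≠ 0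

/-- If `A, B` are reduced then so are `A + B'` and `B`, and likewise `A - B'` and `B`;
conversely if `A + B'` and `B` are reduced then so are `A` and `B`. -/
theorem reduced_add_sub_derivative (A B : Polynomial ℂ) :
    (Reduced A B → Reduced (A + derivative B) B ∧ Reduced (A - derivative B) B) ∧
    (Reduced (A + derivative B) B → Reduced A B) := by
  constructor
  · intro h
    constructor <;> intro c hA hB hd <;>
      simp [eval_add, eval_sub, hd] at hA <;> exact h c hA hB hd
  · intro h c hA hB hd
    exact h c (by simp [hA, hd]) hB hd
end

section
/- Let ℒ : ℂ[x] × ℂ[y] → ℂ be a bilinear functional satisfying, for all polynomials p, s: ℒ(-B₁ p' + A₁ p, s) = ℒ(B₁ p, y·s) and ℒ(p, -B₂ s' + A₂ s) = ℒ(x·p, B₂ s). Then the functional ℒ̂(p, s) := ℒ(p, B₂ s) satisfies the same two relations with A₂ replaced by A₂ - B₂' and A₁, B₁, B₂ unchanged; i.e. ℒ̂ is semiclassical with data (A₁, B₁, A₂ - B₂', B₂). -/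
open Polynomial

/-- A bilinear moment functional `L : ℂ[x] ⊗ ℂ[y] → ℂ` is *semiclassical* with data
`(A₁, B₁, A₂, B₂)` if `L(-B₁p' + A₁p, s) = L(B₁p, y·s)` and
`L(p, -B₂s' + A₂s) = L(x·p, B₂s)` for all polynomials `p, s`. -/
def Semiclassical (L : Polynomial ℂ →ₗ[ℂ] Polynomial ℂ →ₗ[ℂ] ℂ)
    (A₁ B₁ A₂ B₂ : Polynomial ℂ) : Prop :=
  (∀ p s : Polynomial ℂ,
      L (-(B₁ * derivative p) + A₁ * p) s = L (B₁ * p) (X * s)) ∧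
  (∀ p s : Polynomial ℂ,
      L p (-(B₂ * derivative s) + A₂ * s) = L (X * p) (B₂ * s))

/-- If `L` is semiclassical with data `(A₁, B₁, A₂, B₂)`, then the associated functional
`L̂(p, s) := L(p, B₂·s)` is semiclassical with data `(A₁, B₁, A₂ - B₂', B₂)`. -/
theorem semiclassical_hat (L : Polynomial ℂ →ₗ[ℂ] Polynomial ℂ →ₗ[ℂ] ℂ)
    (A₁ B₁ A₂ B₂ : Polynomial ℂ)
    (h : Semiclassical L A₁ B₁ A₂ B₂) :
    Semiclassical (L.compl₂ (LinearMap.mulLeft ℂ B₂)) A₁ B₁ (A₂ - derivative B₂) B₂ := by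
  obtain ⟨h1, h2⟩ := h
  constructor
  · intro p s
    simp only [LinearMap.compl₂_apply, LinearMap.mulLeft_apply]
    rw [show B₂ * (X * s) = X * (B₂ * s) by ring]
    exact h1 p (B₂ * s)
  · intro p s
    simp only [LinearMap.compl₂_apply, LinearMap.mulLeft_apply]
    have key : B₂ * (-(B₂ * derivative s) + (A₂ - derivative B₂) * s)
        = -(B₂ * derivative (B₂ * s)) + A₂ * (B₂ * s) := by
      rw [derivative_mul]; ring
    rw [key, h2 p (B₂ * s)]
end

section
/- Let ℒ be semiclassical with data (A₁, B₁, A₂, B₂). Then the functional ℒ̌(p, s) := ℒ(B₁ p, s) is semiclassical with data (A₁ - B₁', B₁, A₂, B₂). -/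
open Polynomial

/-- If `L` is semiclassical with data `(A₁, B₁, A₂, B₂)`, then the associated functional
`Ľ(p, s) := L(B₁·p, s)` is semiclassical with data `(A₁ - B₁', B₁, A₂, B₂)`. -/
theorem semiclassical_check (L : Polynomial ℂ →ₗ[ℂ] Polynomial ℂ →ₗ[ℂ] ℂ)
    (A₁ B₁ A₂ B₂ : Polynomial ℂ)
    (h : Semiclassical L A₁ B₁ A₂ B₂) :
    Semiclassical (L.comp (LinearMap.mulLeft ℂ B₁)) (A₁ - derivative B₁) B₁ A₂ B₂ := by
  obtain ⟨h1, h2⟩ := h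
  constructor
  · intro p s
    have key : B₁ * (-(B₁ * derivative p) + (A₁ - derivative B₁) * p)
        = -(B₁ * derivative (B₁ * p)) + A₁ * (B₁ * p) := by
      rw [derivative_mul]; ring
    simp only [LinearMap.comp_apply, LinearMap.mulLeft_apply, key]
    have := h1 (B₁ * p) s
    rw [this]
  · intro p s
    simp only [LinearMap.comp_apply, LinearMap.mulLeft_apply]
    have := h2 (B₁ * p) s
    rw [this]
    congr 1; ring_nf
end

section
/- Let ℒ be a bilinear semiclassical moment functional with data (A₁, B₁, A₂, B₂), and suppose monic biorthogonal polynomial sequences (πₙ), (σₙ) exist with ℒ(πₙ, σₘ) = hₙ δₙₘ and hₙ ≠ 0. Let pₙ = πₙ/√hₙ. Then for each n, the polynomial x·pₙ(x) is ℒ-orthogonal to B₂(y)·y^k for all k < n - deg(A₂); that is, ℒ(x pₙ, B₂ y^k) = 0 for all 0 ≤ k < n - deg(A₂). -/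
open Polynomial

lemma pi_ortho_lowdeg (L : Polynomial ℂ →ₗ[ℂ] Polynomial ℂ →ₗ[ℂ] ℂ)
    (π σ : ℕ → Polynomial ℂ) (h : ℕ → ℂ)
    (hσ : ∀ n, (σ n).Monic ∧ (σ n).natDegree = n)
    (hbi : ∀ n m, L (π n) (σ m) = if n = m then h n else 0) :
    ∀ n : ℕ, ∀ q : Polynomial ℂ, q.natDegree < n → L (π n) q = 0 := by
  intro n
  have key : ∀ d : ℕ, ∀ q : Polynomial ℂ, q.natDegree ≤ d → d < n → L (π n) q = 0 := by
    intro d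
    induction d with
    | zero =>
      intro q hq hn
      obtain ⟨c, rfl⟩ := Polynomial.natDegree_eq_zero.mp (Nat.le_zero.mp hq)
      have hσ0 : σ 0 = 1 := (hσ 0).1.natDegree_eq_zero.mp (hσ 0).2
      have : (C c : Polynomial ℂ) = c • σ 0 := by
        rw [hσ0, smul_eq_C_mul, mul_one]
      rw [this, map_smul, hbi]
      simp [hn.ne']
    | succ d ih =>
      intro q hq hn
      rcases eq_or_ne q 0 with rfl | hq0
      · simp
      rcases Nat.lt_or_ge q.natDegree (d + 1) with hlt | hge
      · exact ih q (Nat.lt_succ_iff.mp hlt) (Nat.lt_of_succ_lt hn)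
      have hdeg : q.natDegree = d + 1 := le_antisymm hq hge
      set c := q.leadingCoeff with hc
      have hc0 : c ≠ 0 := Polynomial.leadingCoeff_ne_zero.mpr hq0
      have hσd := hσ (d + 1)
      have hσne : σ (d + 1) ≠ 0 := hσd.1.ne_zero
      have hdegσ : (C c * σ (d + 1)).degree = q.degree := by
        rw [Polynomial.degree_C_mul hc0, Polynomial.degree_eq_natDegree hσne,
          Polynomial.degree_eq_natDegree hq0, hσd.2, hdeg]
      have hlc : q.leadingCoeff = (C c * σ (d + 1)).leadingCoeff := by
        rw [Polynomial.leadingCoeff_mul, Polynomial.leadingCoeff_C, hσd.1.leadingCoeff, mul_one]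
      have hr : (q - C c * σ (d + 1)).degree < q.degree :=
        Polynomial.degree_sub_lt hdegσ.symm hq0 hlc
      have hrnat : (q - C c * σ (d + 1)).natDegree ≤ d := by
        rcases eq_or_ne (q - C c * σ (d + 1)) 0 with hr0 | hr0
        · simp [hr0]
        · have : (q - C c * σ (d + 1)).natDegree < d + 1 := by
            rw [Polynomial.natDegree_lt_iff_degree_lt hr0]
            calc (q - C c * σ (d + 1)).degree < q.degree := hr
              _ = ((d + 1 : ℕ) : WithBot ℕ) := by
                rw [Polynomial.degree_eq_natDegree hq0, hdeg]
          omega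
      have hsplit : q = (q - C c * σ (d + 1)) + c • σ (d + 1) := by
        rw [smul_eq_C_mul]; ring
      rw [hsplit, map_add, map_smul, ih _ hrnat (Nat.lt_of_succ_lt hn), hbi]
      simp [hn.ne']
  intro q hq
  exact key q.natDegree q le_rfl hq

/-- Let `L` be a semiclassical bilinear moment functional (type BB: `deg A₂ ≥ deg B₂ + 1`)
with monic biorthogonal polynomials `πₙ, σₙ`, `L(πₙ, σₘ) = hₙ δₙₘ`, `hₙ ≠ 0`, and
`pₙ = πₙ/√hₙ`. Then `x·pₙ` is `L`-orthogonal to `B₂(y)·y^k` for all `k < n - deg A₂`. -/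
theorem xp_orthogonal_to_B₂_span (L : Polynomial ℂ →ₗ[ℂ] Polynomial ℂ →ₗ[ℂ] ℂ)
    (A₁ B₁ A₂ B₂ : Polynomial ℂ)
    (hBB : B₂.natDegree + 1 ≤ A₂.natDegree)
    (hsc1 : ∀ p s : Polynomial ℂ,
      L (-(B₁ * derivative p) + A₁ * p) s = L (B₁ * p) (X * s))
    (hsc2 : ∀ p s : Polynomial ℂ,
      L p (-(B₂ * derivative s) + A₂ * s) = L (X * p) (B₂ * s))
    (π σ : ℕ → Polynomial ℂ) (h : ℕ → ℂ)
    (hπ : ∀ n, (π n).Monic ∧ (π n).natDegree = n)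
    (hσ : ∀ n, (σ n).Monic ∧ (σ n).natDegree = n)
    (hbi : ∀ n m, L (π n) (σ m) = if n = m then h n else 0)
    (hh : ∀ n, h n ≠ 0)
    (p : ℕ → Polynomial ℂ)
    (hp : ∀ n, p n = C ((h n) ^ (-(1 / 2 : ℂ))) * π n) :
    ∀ n k : ℕ, k < n - A₂.natDegree → L (X * p n) (B₂ * X ^ k) = 0 := by
  intro n k hk
  have hkn : A₂.natDegree + k < n := by omega
  have hsmul : X * p n = ((h n) ^ (-(1 / 2 : ℂ))) • (X * π n) := by
    rw [hp, smul_eq_C_mul]; ring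
  rw [hsmul, map_smul, LinearMap.smul_apply, ← hsc2]
  have hdegq : (-(B₂ * derivative (X ^ k : Polynomial ℂ)) + A₂ * X ^ k).natDegree < n := by
    apply lt_of_le_of_lt (Polynomial.natDegree_add_le _ _)
    apply max_lt
    · rw [Polynomial.natDegree_neg]
      apply lt_of_le_of_lt (Polynomial.natDegree_mul_le)
      have h1 : (derivative (X ^ k : Polynomial ℂ)).natDegree ≤ k := by
        refine le_trans (Polynomial.natDegree_derivative_le _) ?_
        simp [Polynomial.natDegree_X_pow]
      omega
    · apply lt_of_le_of_lt (Polynomial.natDegree_mul_le)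
      rw [Polynomial.natDegree_X_pow]
      omega
  rw [pi_ortho_lowdeg L π σ h hσ hbi n _ hdegq, smul_zero]
end

section
/- Let ℒ be a bilinear functional with biorthogonal families pₙ, sₙ satisfying ℒ(pₙ, sₘ) = δₙₘ. Suppose invertible lower unitriangular semi-infinite matrices (𝟙 + L̂) act on the wave vectors so that p̂ = (𝟙 + L̂)^{-1} p and ŝ = (𝟙 + L̂ᵗ) s / B₂ are polynomial vectors. Then ℒ̂(p̂ₙ, ŝₘ) = δₙₘ where ℒ̂(f, g) := ℒ(f, B₂ g); i.e. p̂ₙ, ŝₙ are biorthogonal for ℒ̂. -/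
open Polynomial Finset

/-!
Put `A i j := L(p̂ᵢ, sⱼ)`. Expanding `pᵢ = p̂ᵢ + ∑ L̂ᵢₖ p̂ₖ` in `L(pᵢ, sⱼ) = δᵢⱼ` says
`(𝟙 + L̂) A = 𝟙`, while expanding `B₂ ŝₘ = sₘ + ∑ L̂ₖₘ sₖ` says that the claim is `A (𝟙 + L̂) = 𝟙`.
Because `𝟙 + L̂` is lower triangular, the first identity holds for the `N × N` truncations, where a
one-sided inverse is two-sided; since `L̂` is banded, the `(n, m)` entry of the truncated product
`A (𝟙 + L̂)` is the untruncated one as soon as `N > m + b`.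
-/

section Truncation

variable {R : Type*} [CommRing R]

def truncate (f : ℕ → ℕ → R) (N : ℕ) : Matrix (Fin N) (Fin N) R :=
  Matrix.of fun i j => f i j

lemma one_add_truncate_mul_truncate_of_lowerTriangular {T : ℕ → ℕ → R}
    (hT : ∀ i j, i ≤ j → T i j = 0) (A : ℕ → ℕ → R) (N : ℕ) :
    (1 + truncate T N) * truncate A N
      = truncate (fun i j => A i j + ∑ k ∈ range i, T i k * A k j) N := by
  rw [add_mul, one_mul]
  ext i j
  rw [Matrix.add_apply, Matrix.mul_apply]
  simp only [truncate, Matrix.of_apply]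
  rw [Fin.sum_univ_eq_sum_range (fun k => T i k * A k j)]
  refine congrArg _ (sum_subset (range_subset_range.2 i.isLt.le) fun k _ hk => ?_).symm
  rw [hT i k (by simpa using hk), zero_mul]

lemma truncate_mul_one_add_truncate (A T : ℕ → ℕ → R) (N : ℕ) :
    truncate A N * (1 + truncate T N)
      = truncate (fun i j => A i j + ∑ k ∈ range N, A i k * T k j) N := by
  rw [mul_add, mul_one]
  ext i j
  rw [Matrix.add_apply, Matrix.mul_apply]
  simp only [truncate, Matrix.of_apply]
  rw [Fin.sum_univ_eq_sum_range (fun k => A i k * T k j)]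

lemma truncate_kronecker (N : ℕ) :
    truncate (fun i j => if i = j then (1 : R) else 0) N = 1 := by
  ext i j
  simp [truncate, Matrix.one_apply, Fin.val_inj]

lemma mul_one_add_eq_kronecker_of_lowerTriangular {T A : ℕ → ℕ → R}
    (hT : ∀ i j, i ≤ j → T i j = 0)
    (hA : ∀ i j, A i j + ∑ k ∈ range i, T i k * A k j = if i = j then 1 else 0)
    {N n m : ℕ} (hn : n < N) (hm : m < N) :
    A n m + ∑ k ∈ range N, A n k * T k m = if n = m then 1 else 0 := by
  have hleft : (1 + truncate T N) * truncate A N = (1 : Matrix (Fin N) (Fin N) R) := by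
    rw [one_add_truncate_mul_truncate_of_lowerTriangular hT, ← truncate_kronecker]
    simp only [hA]
  have hright : truncate A N * (1 + truncate T N) = 1 := mul_eq_one_comm.mp hleft
  rw [truncate_mul_one_add_truncate, ← truncate_kronecker] at hright
  exact congrFun₂ hright ⟨n, hn⟩ ⟨m, hm⟩

lemma sum_range_mul_eq_sum_Ioc_of_band {T : ℕ → ℕ → R} {b : ℕ}
    (hT_lower : ∀ i j, i ≤ j → T i j = 0) (hT_band : ∀ i j, j + b < i → T i j = 0)
    (a : ℕ → R) {N m : ℕ} (hN : m + b < N) :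
    ∑ k ∈ range N, a k * T k m = ∑ k ∈ Ioc m (m + b), T k m * a k := by
  have hsub : Ioc m (m + b) ⊆ range N := fun k hk => by
    simp only [mem_Ioc] at hk
    exact mem_range.2 (by omega)
  rw [← sum_subset hsub fun k _ hk => ?_]
  · exact sum_congr rfl fun k _ => mul_comm _ _
  · rcases le_or_gt k m with hkm | hmk
    · rw [hT_lower k m hkm, mul_zero]
    · rw [hT_band k m (by simp only [mem_Ioc, not_and, not_le] at hk; exact hk hmk), mul_zero]

end Truncation

section Pairing

variable {R : Type*} [CommRing R] {ι : Type*}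
  (L : R[X] →ₗ[R] R[X] →ₗ[R] R) (c : ι → R) (t : Finset ι)

lemma bilin_add_sum_C_mul_left (f g : R[X]) (u : ι → R[X]) :
    L (f + ∑ k ∈ t, C (c k) * u k) g = L f g + ∑ k ∈ t, c k * L (u k) g := by
  simp [← smul_eq_C_mul]

lemma bilin_add_sum_C_mul_right (f g : R[X]) (u : ι → R[X]) :
    L f (g + ∑ k ∈ t, C (c k) * u k) = L f g + ∑ k ∈ t, c k * L f (u k) := by
  simp [← smul_eq_C_mul]

end Pairing

theorem biorthogonality_hat_general (L : Polynomial ℂ →ₗ[ℂ] Polynomial ℂ →ₗ[ℂ] ℂ)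
    (B₂ : Polynomial ℂ) (b : ℕ)
    (p s phat shat : ℕ → Polynomial ℂ) (Lh : ℕ → ℕ → ℂ)
    (hLh_lower : ∀ n m, n ≤ m → Lh n m = 0)
    (hLh_band : ∀ n m, m + b < n → Lh n m = 0)
    (hbi : ∀ n m, L (p n) (s m) = if n = m then 1 else 0)
    (hphat : ∀ n, p n = phat n + ∑ m ∈ Finset.range n, C (Lh n m) * phat m)
    (hshat : ∀ n, B₂ * shat n = s n + ∑ m ∈ Finset.Ioc n (n + b), C (Lh m n) * s m) :
    ∀ n m, L (phat n) (B₂ * shat m) = if n = m then 1 else 0 := by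
  intro n m
  have hleft : ∀ i j, L (phat i) (s j) + ∑ k ∈ range i, Lh i k * L (phat k) (s j)
      = if i = j then 1 else 0 := fun i j => by
    rw [← hbi, hphat, bilin_add_sum_C_mul_left]
  have hright := mul_one_add_eq_kronecker_of_lowerTriangular hLh_lower hleft
    (N := n + m + b + 1) (n := n) (m := m) (by omega) (by omega)
  rwa [sum_range_mul_eq_sum_Ioc_of_band hLh_lower hLh_band _ (by omega),
    ← bilin_add_sum_C_mul_right, ← hshat] at hright

/-- Let `L` be bilinear with biorthogonal families `pₙ, sₙ` (`deg pₙ = deg sₙ = n`,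
`L(pₙ, sₘ) = δₙₘ`). If `L̂` is a strictly lower triangular band matrix such that
`p̂ = (𝟙 + L̂)⁻¹p` (i.e. `(𝟙 + L̂)p̂ = p`) and `ŝ = (𝟙 + L̂ᵗ)s / B₂` are polynomial
vectors, then `L̂(p̂ₙ, ŝₘ) = δₙₘ` for the functional `L̂(f,g) := L(f, B₂·g)`. -/
theorem biorthogonality_hat (L : Polynomial ℂ →ₗ[ℂ] Polynomial ℂ →ₗ[ℂ] ℂ)
    (B₂ : Polynomial ℂ) (b : ℕ)
    (p s phat shat : ℕ → Polynomial ℂ) (Lh : ℕ → ℕ → ℂ)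
    (hLh_lower : ∀ n m, n ≤ m → Lh n m = 0)
    (hLh_band : ∀ n m, m + b < n → Lh n m = 0)
    (hdeg : ∀ n, (p n).natDegree = n ∧ (s n).natDegree = n)
    (hbi : ∀ n m, L (p n) (s m) = if n = m then 1 else 0)
    (hphat : ∀ n, p n = phat n + ∑ m ∈ Finset.range n, C (Lh n m) * phat m)
    (hshat : ∀ n, B₂ * shat n = s n + ∑ m ∈ Finset.Ioc n (n + b), C (Lh m n) * s m) :
    ∀ n m, L (phat n) (B₂ * shat m) = if n = m then 1 else 0 :=
  biorthogonality_hat_general L B₂ b p s phat shat Lh hLh_lower hLh_band hbi hphat hshat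
end

section
/- Let L, L̂ be strictly lower triangular semi-infinite matrices with finitely many nonzero subdiagonals, and A, Â lower-Hessenberg semi-infinite matrices, satisfying x(𝟙 + L)p = A p and ℒ(p, (-B₂∂_y + A₂)ŝᵗ) = ℒ(x p, B₂ ŝᵗ) type relations encoded as: the biorthogonality ℒ(p, sᵗ) = 𝟙, x(𝟙 + L)p = Ap, ∂_y-recurrence ∇_y(𝟙 + L̂ᵗ)s = -Âᵗ s, and semiclassical relation ℒ(f, -B₂g' + A₂g) = ℒ(xf, B₂g). Then A(𝟙 + L̂) = (𝟙 + L)Â. -/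
open Polynomial

/-- Intertwining relation `A(𝟙 + L̂) = (𝟙 + L)Â` between the multiplicative recurrence
matrices `L, A` of the biorthogonal polynomials and the matrices `L̂, Â` of the
differential recurrence `∇_y(𝟙 + L̂ᵗ)s = -Âᵗs`, for a semiclassical functional `L`.
All matrices are semi-infinite band matrices (L, L̂ strictly lower triangular with
band width `b`; A, Â lower-Hessenberg with band width `b`), and the matrix products
are the indicated finite sums. -/
theorem intertwining_A_L (L : Polynomial ℂ →ₗ[ℂ] Polynomial ℂ →ₗ[ℂ] ℂ)
    (A₂ B₂ : Polynomial ℂ) (b : ℕ)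
    (p s shat : ℕ → Polynomial ℂ)
    (Lm Lh Am Ah : ℕ → ℕ → ℂ)
    (hL_lower : ∀ n m, n ≤ m → Lm n m = 0)
    (hLh_lower : ∀ n m, n ≤ m → Lh n m = 0)
    (hLh_band : ∀ n m, m + b < n → Lh n m = 0)
    (hA_hess : ∀ n m, n + 1 < m → Am n m = 0)
    (hAh_hess : ∀ n m, n + 1 < m → Ah n m = 0)
    (hAh_band : ∀ n m, m + b < n → Ah n m = 0)
    (hdeg : ∀ n, (p n).natDegree = n ∧ (s n).natDegree = n)
    -- biorthogonality L(p, sᵗ) = 𝟙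
    (hbi : ∀ n m, L (p n) (s m) = if n = m then 1 else 0)
    -- multiplicative recurrence x(𝟙 + L)p = Ap
    (hmult : ∀ n, X * (p n + ∑ m ∈ Finset.range n, C (Lm n m) * p m)
        = ∑ m ∈ Finset.range (n + 2), C (Am n m) * p m)
    -- ŝ := (𝟙 + L̂ᵗ)s / B₂
    (hshat : ∀ n, B₂ * shat n = s n + ∑ m ∈ Finset.Ioc n (n + b), C (Lh m n) * s m)
    -- differential recurrence ∇_y(𝟙 + L̂ᵗ)s = -Âᵗs, i.e. B₂ŝ' - A₂ŝ = -Âᵗs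
    (hdiffrec : ∀ n, B₂ * derivative (shat n) - A₂ * shat n
        = -(∑ m ∈ Finset.range (n + b + 1), C (Ah m n) * s m))
    -- semiclassical relation L(f, -B₂g' + A₂g) = L(x·f, B₂g)
    (hsc2 : ∀ f g : Polynomial ℂ,
        L f (-(B₂ * derivative g) + A₂ * g) = L (X * f) (B₂ * g)) :
    ∀ n k, (∑ m ∈ Finset.range (n + 2),
        Am n m * ((if m = k then (1 : ℂ) else 0) + Lh m k))
      = ∑ m ∈ Finset.range (n + 1),
          ((if n = m then (1 : ℂ) else 0) + Lm n m) * Ah m k := by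
  intro n k
  -- Step 1: (δ_{mk} + Lh m k) = L (p m) (B₂ * shat k)
  have h1 : ∀ m, ((if m = k then (1:ℂ) else 0) + Lh m k) = L (p m) (B₂ * shat k) := by
    intro m
    rw [hshat k, map_add, map_sum, hbi]
    have hterm : ∀ j ∈ Finset.Ioc k (k+b),
        L (p m) (C (Lh j k) * s j) = Lh j k * (if m = j then 1 else 0) := by
      intro j _
      rw [← smul_eq_C_mul, map_smul, hbi, smul_eq_mul]
    rw [Finset.sum_congr rfl hterm]
    have hsum : ∑ j ∈ Finset.Ioc k (k+b), Lh j k * (if m = j then (1:ℂ) else 0)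
        = if m ∈ Finset.Ioc k (k+b) then Lh m k else 0 := by
      simp [eq_comm, mul_ite]
    rw [hsum]
    congr 1
    by_cases hmem : m ∈ Finset.Ioc k (k+b)
    · rw [if_pos hmem]
    · rw [if_neg hmem]
      simp only [Finset.mem_Ioc, not_and_or, not_lt, not_le] at hmem
      rcases hmem with h | h
      · exact hLh_lower m k h
      · exact hLh_band m k h
  -- Step 2: evaluate L f q for f = p n + ∑ Lm n m • p m
  have hLf : ∀ q, L (p n + ∑ m ∈ Finset.range n, C (Lm n m) * p m) q
      = L (p n) q + ∑ m ∈ Finset.range n, Lm n m * L (p m) q := by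
    intro q
    rw [map_add, LinearMap.add_apply]
    congr 1
    rw [map_sum, LinearMap.sum_apply]
    refine Finset.sum_congr rfl fun m _ => ?_
    rw [← smul_eq_C_mul, map_smul, LinearMap.smul_apply, smul_eq_mul]
  -- Step 3: rhs of diff recurrence
  have hdiff' : -(B₂ * derivative (shat k)) + A₂ * shat k
      = ∑ m ∈ Finset.range (k + b + 1), C (Ah m k) * s m := by
    linear_combination -hdiffrec k
  calc ∑ m ∈ Finset.range (n + 2), Am n m * ((if m = k then (1 : ℂ) else 0) + Lh m k)
      = ∑ m ∈ Finset.range (n + 2), Am n m * L (p m) (B₂ * shat k) := by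
        refine Finset.sum_congr rfl fun m _ => ?_; rw [h1]
    _ = L (∑ m ∈ Finset.range (n + 2), C (Am n m) * p m) (B₂ * shat k) := by
        rw [map_sum, LinearMap.sum_apply]
        refine Finset.sum_congr rfl fun m _ => ?_
        rw [← smul_eq_C_mul, map_smul, LinearMap.smul_apply, smul_eq_mul]
    _ = L (X * (p n + ∑ m ∈ Finset.range n, C (Lm n m) * p m)) (B₂ * shat k) := by
        rw [hmult n]
    _ = L (p n + ∑ m ∈ Finset.range n, C (Lm n m) * p m)
          (-(B₂ * derivative (shat k)) + A₂ * shat k) := (hsc2 _ _).symm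
    _ = L (p n + ∑ m ∈ Finset.range n, C (Lm n m) * p m)
          (∑ m ∈ Finset.range (k + b + 1), C (Ah m k) * s m) := by rw [hdiff']
    _ = ∑ j ∈ Finset.range (k + b + 1),
          Ah j k * ((if n = j then (1:ℂ) else 0) + if j < n then Lm n j else 0) := by
        rw [map_sum]
        refine Finset.sum_congr rfl fun j hj => ?_
        rw [← smul_eq_C_mul, map_smul, smul_eq_mul, hLf, hbi]
        congr 1
        congr 1
        have : ∑ m ∈ Finset.range n, Lm n m * L (p m) (s j)
            = ∑ m ∈ Finset.range n, Lm n m * (if m = j then 1 else 0) := by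
          refine Finset.sum_congr rfl fun m _ => by rw [hbi]
        rw [this]
        simp [eq_comm, mul_ite, Finset.mem_range]
    _ = ∑ m ∈ Finset.range (n + 1), ((if n = m then (1 : ℂ) else 0) + Lm n m) * Ah m k := by
        set N := max (n + 1) (k + b + 1) with hN
        rw [Finset.sum_subset (Finset.range_subset_range.2 (le_max_right (n+1) (k+b+1)) :
              Finset.range (k+b+1) ⊆ Finset.range N)
            (fun j _ hj => by
              have : k + b < j := by simp [Finset.mem_range] at hj; omega
              rw [hAh_band j k this, zero_mul]),
          Finset.sum_subset (Finset.range_subset_range.2 (le_max_left (n+1) (k+b+1)) :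
              Finset.range (n+1) ⊆ Finset.range N)
            (fun m _ hm => by
              have hnm : n + 1 ≤ m := by simp [Finset.mem_range] at hm; omega
              have h1 : n ≠ m := by omega
              rw [hL_lower n m (by omega), if_neg h1, add_zero, zero_mul])]
        refine Finset.sum_congr rfl fun j _ => ?_
        rcases lt_trichotomy j n with h | h | h
        · have h1 : n ≠ j := by omega
          rw [if_neg h1, if_pos h]; ring
        · subst h
          rw [if_pos rfl, if_neg (lt_irrefl j), hL_lower j j le_rfl]; ring
        · have h1 : n ≠ j := by omega
          rw [if_neg h1, if_neg (by omega), hL_lower n j (by omega)]; ring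
end

section
/- For any polynomials A, B ∈ ℂ[y] and any x ∈ ℂ, the function B₂(x; y, s) := ((B(y)-B(s))/(y-s))·(x - 1/(y-s)) - (A(y) - B'(s) - A(s))/(y-s) extends to a polynomial in (y, s), and its value on the diagonal y = s equals x·B'(s) - (1/2)B''(s) - A'(s). -/
/-!
Write `u = y - s`. Taylor expansion at `s` gives `B(s + u) = B(s) + u Q(u, s)` and
`Q(u, s) = B'(s) + u R(u, s)` with `Q`, `R` polynomial (shifted Taylor coefficients), and likewise
`A(s + u) = A(s) + u Q_A(u, s)`. Substituting, the kernel equals `x Q - R - Q_A`, whose value at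
`u = 0` is `x B'(s) - B''(s)/2 - A'(s)`, because `R(0, s)` is the second Hasse derivative of `B`.
-/

open Polynomial

namespace Polynomial

theorem hasseDeriv_map {R S : Type*} [Semiring R] [Semiring S] (f : R →+* S) (p : R[X]) (k : ℕ) :
    hasseDeriv k (p.map f) = (hasseDeriv k p).map f := by
  ext n
  simp [hasseDeriv_coeff]

section CommSemiring

variable {R : Type*} [CommSemiring R]

theorem evalEval_zero_eq_eval_coeff_zero (F : R[X][X]) (s : R) :
    F.evalEval s 0 = (F.coeff 0).eval s := by
  simp [evalEval, coeff_zero_eq_eval_zero]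

theorem evalEval_eq_mul_evalEval_divX_add (F : R[X][X]) (s u : R) :
    F.evalEval s u = u * F.divX.evalEval s u + F.evalEval s 0 := by
  conv_lhs => rw [← X_mul_divX_add F]
  simp [evalEval, coeff_zero_eq_eval_zero]

/-- The expansion `p(s + u) = ∑ₖ (Dᵏ p)(s) uᵏ`, with `u` the outer and `s` the inner variable. -/
noncomputable def taylorExpansion (p : R[X]) : R[X][X] := taylor X (p.map C)

theorem evalEval_taylorExpansion (p : R[X]) (s u : R) :
    (taylorExpansion p).evalEval s u = p.eval (s + u) := by
  rw [taylorExpansion, evalEval, taylor_eval, eval_map, ← comp, eval_comp]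
  simp [add_comm]

theorem coeff_taylorExpansion (p : R[X]) (k : ℕ) :
    (taylorExpansion p).coeff k = hasseDeriv k p := by
  rw [taylorExpansion, taylor_coeff, hasseDeriv_map, eval_map, eval₂_C_X]

/-- The divided difference `(p(s + u) - p(s)) / u`, as a polynomial in `u` and `s`. -/
noncomputable def divDiff (p : R[X]) : R[X][X] := (taylorExpansion p).divX

theorem eval_add_eq_mul_evalEval_divDiff_add (p : R[X]) (s u : R) :
    p.eval (s + u) = u * (divDiff p).evalEval s u + p.eval s := by
  rw [← evalEval_taylorExpansion, evalEval_eq_mul_evalEval_divX_add,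
    evalEval_zero_eq_eval_coeff_zero, coeff_taylorExpansion, hasseDeriv_zero', divDiff]

theorem evalEval_divDiff (p : R[X]) (s u : R) :
    (divDiff p).evalEval s u = u * (divDiff p).divX.evalEval s u + (derivative p).eval s := by
  rw [evalEval_eq_mul_evalEval_divX_add, evalEval_zero_eq_eval_coeff_zero, divDiff, coeff_divX,
    coeff_taylorExpansion, hasseDeriv_one']

theorem two_mul_evalEval_divX_divDiff_zero (p : R[X]) (s : R) :
    2 * (divDiff p).divX.evalEval s 0 = (derivative (derivative p)).eval s := by
  have h : (2 : R[X]) * hasseDeriv 2 p = derivative (derivative p) := by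
    simpa using congrFun (factorial_smul_hasseDeriv (R := R) (k := 2)) p
  rw [evalEval_zero_eq_eval_coeff_zero, divDiff, coeff_divX, coeff_divX, coeff_taylorExpansion, ← h,
    eval_mul, eval_ofNat]

end CommSemiring

theorem exists_mvPolynomial_eval_eq_evalEval_sub {R : Type*} [CommRing R] (F : R[X][X]) :
    ∃ P : MvPolynomial (Fin 2) R, ∀ y s, MvPolynomial.eval ![y, s] P = F.evalEval s (y - s) := by
  refine ⟨aevalAeval (.X 1) (.X 0 - .X 1) F, fun y s => ?_⟩
  have hcomp : (MvPolynomial.aeval ![y, s]).comp (aevalAeval (R := R) (.X 1) (.X 0 - .X 1)) =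
      aevalAeval s (y - s) := by
    apply (aevalAevalEquiv R R).symm.injective
    simp
  rw [← coe_aevalAeval_eq_evalEval, ← hcomp]
  rfl

end Polynomial

/-- For polynomials `A, B ∈ ℂ[y]` and `x ∈ ℂ`, the bilinear concomitant kernel
`B₂(x; y, s) = ((B(y)-B(s))/(y-s))·(x - 1/(y-s)) - (A(y) - B'(s) - A(s))/(y-s)`
extends to a polynomial in `(y, s)`, with diagonal value
`x·B'(s) - B''(s)/2 - A'(s)`. -/
theorem concomitant_kernel_is_polynomial (A B : Polynomial ℂ) (x : ℂ) :
    ∃ P : MvPolynomial (Fin 2) ℂ,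
      (∀ y s : ℂ, y ≠ s →
        MvPolynomial.eval ![y, s] P =
          ((B.eval y - B.eval s) / (y - s)) * (x - 1 / (y - s)) -
            (A.eval y - (derivative B).eval s - A.eval s) / (y - s)) ∧
      (∀ s : ℂ,
        MvPolynomial.eval ![s, s] P =
          x * (derivative B).eval s - (derivative (derivative B)).eval s / 2 -
            (derivative A).eval s) := by
  obtain ⟨P, hP⟩ :=
    exists_mvPolynomial_eval_eq_evalEval_sub (CC x * divDiff B - (divDiff B).divX - divDiff A)
  refine ⟨P, fun y s hys => ?_, fun s => ?_⟩
  · have hB := eval_add_eq_mul_evalEval_divDiff_add B s (y - s)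
    have hA := eval_add_eq_mul_evalEval_divDiff_add A s (y - s)
    have hB' := evalEval_divDiff B s (y - s)
    rw [add_sub_cancel] at hB hA
    rw [hP, evalEval_sub, evalEval_sub, evalEval_mul, evalEval_CC, hB, hA, hB']
    field_simp [sub_ne_zero.mpr hys]
    ring
  · rw [hP, sub_self, evalEval_sub, evalEval_sub, evalEval_mul, evalEval_CC, evalEval_divDiff B,
      evalEval_divDiff A, ← two_mul_evalEval_divX_divDiff_zero]
    ring
end

section
/- Let ℒ be a bilinear functional with ℒ(pₙ, sₘ) = δₙₘ, and suppose x(𝟙 + L̂)p̂ = Â p̂ and ∂_y Φᵗ(𝟙 + L̂) = -Φᵗ Â hold (where Φ = s e^{-V₂}, p̂ = (𝟙 + L̂)^{-1} p e^{-V₁} up to the exponential factor). Then for the projector Πₙ (identity on indices 0,…,n-1, zero elsewhere): (x + ∂_y)[Φᵗ(y)(𝟙 + L̂)Πₙ(𝟙 + L̂)^{-1}Ψ(x)] = Φᵗ(y)·[xL̂ - Â, Πₙ]·(𝟙 + L̂)^{-1}Ψ(x), where [·,·] is the matrix commutator. -/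
/-!
Differentiating termwise, the hypothesis on `∂_y` turns the left side into
`-∑_{k<n} (ΦᵗÂ)_k Ψ̂_k`. On the right, pairing with the commutator `[xL̂ - Â, Πₙ]` splits into
`∑_{j<n} (Φᵗ(xL̂ - Â))_j Ψ̂_j - ∑_{i<n} Φ_i ((xL̂ - Â)Ψ̂)_i`. The recurrence says exactly that
`((xL̂ - Â)Ψ̂)_i = -xΨ̂_i`, and the band structure truncates the column sums of `Φᵗ(xL̂ - Â)` to the
finite sums of the hypotheses; everything then cancels term by term.
-/

open Finset

theorem sum_range_indicator_lt_mul {R : Type*} [Semiring R] {N n : ℕ} (g : ℕ → R) (hn : n ≤ N) :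
    ∑ j ∈ range N, (if j < n then (1 : R) else 0) * g j = ∑ j ∈ range n, g j := by
  rw [eventually_constant_sum (fun j hj => by rw [if_neg (not_lt.2 hj), zero_mul]) hn]
  exact sum_congr rfl fun j hj => by rw [if_pos (mem_range.1 hj), one_mul]

section

variable {R : Type*} [CommRing R]

theorem sum_mul_commutator_projector {N n : ℕ} (u v : ℕ → R) (M : ℕ → ℕ → R) (hn : n ≤ N) :
    ∑ i ∈ range N, ∑ j ∈ range N,
        u i * (M i j * ((if j < n then (1 : R) else 0) - (if i < n then (1 : R) else 0))) * v j
      = ∑ j ∈ range n, (∑ i ∈ range N, u i * M i j) * v j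
        - ∑ i ∈ range n, u i * ∑ j ∈ range N, M i j * v j := by
  set P : ℕ → R := fun k => if k < n then 1 else 0
  have hcols : ∑ i ∈ range N, ∑ j ∈ range N, P j * (u i * M i j * v j)
      = ∑ j ∈ range N, P j * ((∑ i ∈ range N, u i * M i j) * v j) := by
    rw [sum_comm]
    simp only [sum_mul, mul_sum]
  have hrows : ∑ i ∈ range N, ∑ j ∈ range N, P i * (u i * (M i j * v j))
      = ∑ i ∈ range N, P i * (u i * ∑ j ∈ range N, M i j * v j) := by
    simp only [mul_sum]
  calc _ = ∑ i ∈ range N, ∑ j ∈ range N, P j * (u i * M i j * v j)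
        - ∑ i ∈ range N, ∑ j ∈ range N, P i * (u i * (M i j * v j)) := by
        simp only [← sum_sub_distrib]
        exact sum_congr rfl fun i _ => sum_congr rfl fun j _ => by ring
    _ = _ := by
        rw [hcols, hrows, sum_range_indicator_lt_mul _ hn, sum_range_indicator_lt_mul _ hn]

theorem sum_mul_sub_col_of_band {b N j : ℕ} (x : R) (f ℓ a : ℕ → R)
    (hℓ_lower : ∀ i ≤ j, ℓ i = 0) (hℓ_band : ∀ i, j + b < i → ℓ i = 0)
    (ha_band : ∀ i, j + b < i → a i = 0) (hN : j + b + 2 ≤ N) :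
    ∑ i ∈ range N, f i * (x * ℓ i - a i)
      = x * ∑ i ∈ Ioc j (j + b), ℓ i * f i - ∑ i ∈ range (j + b + 2), a i * f i := by
  have hℓ : ∑ i ∈ Ioc j (j + b), ℓ i * f i = ∑ i ∈ range N, ℓ i * f i := by
    refine sum_subset (fun i hi => ?_) fun i _ hi => ?_
    · rw [mem_Ioc] at hi
      rw [mem_range]
      omega
    · rw [mem_Ioc, not_and_or, not_lt, not_le] at hi
      rcases hi with hi | hi
      · rw [hℓ_lower i hi, zero_mul]
      · rw [hℓ_band i hi, zero_mul]
  have ha : ∑ i ∈ range N, a i * f i = ∑ i ∈ range (j + b + 2), a i * f i :=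
    eventually_constant_sum (fun i hi => by rw [ha_band i (by omega), zero_mul]) hN
  rw [hℓ, ← ha, mul_sum, ← sum_sub_distrib]
  exact sum_congr rfl fun i _ => by ring

theorem sum_mul_sub_row_of_recurrence {N i : ℕ} (x : R) (ψ ℓ a : ℕ → R)
    (hℓ_lower : ∀ k, i ≤ k → ℓ k = 0) (ha_hess : ∀ k, i + 2 ≤ k → a k = 0)
    (hrec : x * (ψ i + ∑ k ∈ range i, ℓ k * ψ k) = ∑ k ∈ range (i + 2), a k * ψ k)
    (hN : i + 2 ≤ N) :
    ∑ k ∈ range N, (x * ℓ k - a k) * ψ k = -(x * ψ i) := by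
  have hℓ : ∑ k ∈ range N, ℓ k * ψ k = ∑ k ∈ range i, ℓ k * ψ k :=
    eventually_constant_sum (fun k hk => by rw [hℓ_lower k hk, zero_mul]) (by omega)
  have ha : ∑ k ∈ range N, a k * ψ k = ∑ k ∈ range (i + 2), a k * ψ k :=
    eventually_constant_sum (fun k hk => by rw [ha_hess k hk, zero_mul]) hN
  have hsplit : ∑ k ∈ range N, (x * ℓ k - a k) * ψ k
      = x * ∑ k ∈ range N, ℓ k * ψ k - ∑ k ∈ range N, a k * ψ k := by
    rw [mul_sum, ← sum_sub_distrib]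
    exact sum_congr rfl fun k _ => by ring
  rw [hsplit, hℓ, ha, ← hrec]
  ring

end

theorem christoffel_darboux_commutator_general (b n : ℕ)
    (φ ψh : ℕ → ℂ → ℂ)
    (Lh Ah : ℕ → ℕ → ℂ)
    (hLh_lower : ∀ i j, i ≤ j → Lh i j = 0)
    (hLh_band : ∀ i j, j + b < i → Lh i j = 0)
    (hAh_hess : ∀ i j, i + 1 < j → Ah i j = 0)
    (hAh_band : ∀ i j, j + b < i → Ah i j = 0)
    -- x(𝟙 + L̂)Ψ̂ = ÂΨ̂
    (hmult : ∀ m x, x * (ψh m x + ∑ k ∈ Finset.range m, Lh m k * ψh k x)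
        = ∑ k ∈ Finset.range (m + 2), Ah m k * ψh k x)
    -- ∂_y Φᵗ(𝟙 + L̂) = -ΦᵗÂ (columnwise)
    (hdiff : ∀ k y, HasDerivAt
        (fun y' => φ k y' + ∑ j ∈ Finset.Ioc k (k + b), Lh j k * φ j y')
        (-(∑ j ∈ Finset.range (k + b + 2), Ah j k * φ j y)) y) :
    ∀ x y : ℂ, HasDerivAt
      (fun y' => ∑ k ∈ Finset.range n,
        (φ k y' + ∑ j ∈ Finset.Ioc k (k + b), Lh j k * φ j y') * ψh k x)
      ((∑ i ∈ Finset.range (n + b + 2), ∑ j ∈ Finset.range (n + b + 2),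
          φ i y * ((x * Lh i j - Ah i j) *
            ((if j < n then (1 : ℂ) else 0) - (if i < n then (1 : ℂ) else 0))) *
            ψh j x)
        - x * ∑ k ∈ Finset.range n,
            (φ k y + ∑ j ∈ Finset.Ioc k (k + b), Lh j k * φ j y) * ψh k x)
      y := by
  intro x y
  refine (HasDerivAt.fun_sum fun k (_ : k ∈ range n) => (hdiff k y).mul_const (ψh k x)).congr_deriv
    (Eq.symm ?_)
  have hcol : ∀ j < n, ∑ i ∈ range (n + b + 2), φ i y * (x * Lh i j - Ah i j)
      = x * ∑ i ∈ Ioc j (j + b), Lh i j * φ i y - ∑ i ∈ range (j + b + 2), Ah i j * φ i y :=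
    fun j _ => sum_mul_sub_col_of_band x (φ · y) (Lh · j) (Ah · j) (fun i hi => hLh_lower i j hi)
      (fun i hi => hLh_band i j hi) (fun i hi => hAh_band i j hi) (by omega)
  have hrow : ∀ i < n, ∑ j ∈ range (n + b + 2), (x * Lh i j - Ah i j) * ψh j x = -(x * ψh i x) :=
    fun i _ => sum_mul_sub_row_of_recurrence x (ψh · x) (Lh i) (Ah i) (hLh_lower i)
      (fun k hk => hAh_hess i k hk) (hmult i x) (by omega)
  rw [sum_mul_commutator_projector (φ · y) (ψh · x) (fun i j => x * Lh i j - Ah i j) (by omega),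
    mul_sum, ← sum_sub_distrib, ← sum_sub_distrib]
  refine sum_congr rfl fun k hk => ?_
  rw [hcol k (mem_range.1 hk), hrow k (mem_range.1 hk)]
  ring

/-- Christoffel–Darboux commutator identity: with `Ψ̂ = (𝟙 + L̂)⁻¹Ψ` (i.e.
`(𝟙 + L̂)Ψ̂ = Ψ`), the recurrence `x(𝟙 + L̂)Ψ̂ = ÂΨ̂`, and the differential
recurrence `∂_y Φᵗ(𝟙 + L̂) = -ΦᵗÂ`, one has, for the projector `Πₙ`,
`(x + ∂_y)[Φᵗ(y)(𝟙 + L̂)Πₙ(𝟙 + L̂)⁻¹Ψ(x)] = Φᵗ(y)[xL̂ - Â, Πₙ](𝟙 + L̂)⁻¹Ψ(x)`.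
Here `L̂` is strictly lower triangular with band width `b`, `Â` is lower-Hessenberg
with band width `b`, and all matrix products are the indicated finite sums. -/
theorem christoffel_darboux_commutator (b n : ℕ)
    (φ ψ ψh : ℕ → ℂ → ℂ)
    (Lh Ah : ℕ → ℕ → ℂ)
    (hLh_lower : ∀ i j, i ≤ j → Lh i j = 0)
    (hLh_band : ∀ i j, j + b < i → Lh i j = 0)
    (hAh_hess : ∀ i j, i + 1 < j → Ah i j = 0)
    (hAh_band : ∀ i j, j + b < i → Ah i j = 0)
    -- Ψ = (𝟙 + L̂)Ψ̂
    (hinv : ∀ m x, ψ m x = ψh m x + ∑ k ∈ Finset.range m, Lh m k * ψh k x)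
    -- x(𝟙 + L̂)Ψ̂ = ÂΨ̂
    (hmult : ∀ m x, x * (ψh m x + ∑ k ∈ Finset.range m, Lh m k * ψh k x)
        = ∑ k ∈ Finset.range (m + 2), Ah m k * ψh k x)
    -- ∂_y Φᵗ(𝟙 + L̂) = -ΦᵗÂ (columnwise)
    (hdiff : ∀ k y, HasDerivAt
        (fun y' => φ k y' + ∑ j ∈ Finset.Ioc k (k + b), Lh j k * φ j y')
        (-(∑ j ∈ Finset.range (k + b + 2), Ah j k * φ j y)) y) :
    ∀ x y : ℂ, HasDerivAt
      (fun y' => ∑ k ∈ Finset.range n,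
        (φ k y' + ∑ j ∈ Finset.Ioc k (k + b), Lh j k * φ j y') * ψh k x)
      ((∑ i ∈ Finset.range (n + b + 2), ∑ j ∈ Finset.range (n + b + 2),
          φ i y * ((x * Lh i j - Ah i j) *
            ((if j < n then (1 : ℂ) else 0) - (if i < n then (1 : ℂ) else 0))) *
            ψh j x)
        - x * ∑ k ∈ Finset.range n,
            (φ k y + ∑ j ∈ Finset.Ioc k (k + b), Lh j k * φ j y) * ψh k x)
      y :=
  christoffel_darboux_commutator_general b n φ ψh Lh Ah hLh_lower hLh_band hAh_hess hAh_band hmult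
    hdiff
end
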